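/- arXiv:2308.09320 — 2 statements merged into one kernel-verified Lean document; each statement's English description precedes it below -/
import Mathlib

section
/- Let n, m be positive integers, Ψ : ℝ → Mat_{n×m}(ℝ) and d̃ : ℝ → ℝⁿ be continuous with ‖d̃(t)‖ ≤ ρ₂ for all t, where ρ₂ > 0. Let P and L be n×n positive definite diagonal matrices, and let c₁ = λ_min(PL) and c₂ = λ_max(P). Suppose ṽ : ℝ → ℝⁿ and θ̃ : ℝ → ℝᵐ are differentiable and satisfy ṽ′(t) = Ψ(t) θ̃(t) − L ṽ(t) − d̃(t) and θ̃′(t) = −Ψ(t)ᵀ P ṽ(t) for all t. Then the function V₁(t) = ½ ṽ(t)ᵀ P ṽ(t) + ½ ‖θ̃(t)‖² satisfies V₁′(t) ≤ − c₁ ‖ṽ(t)‖² + c₂ ρ₂ ‖ṽ(t)‖ for all t. -/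
open Matrix

/-- Multiplication of a matrix with a vector of the corresponding Euclidean space. -/
def mulVecE {n m : ℕ} (M : Matrix (Fin n) (Fin m) ℝ) (x : EuclideanSpace ℝ (Fin m)) :
    EuclideanSpace ℝ (Fin n) :=
  WithLp.toLp 2 (M.mulVec x)

/-!
Writing `ṽᵀPṽ = ⟪ṽ, Pṽ⟫` with `P` symmetric, `V₁′ = ⟪Pṽ, ṽ′⟫ + ⟪θ̃, θ̃′⟫`. The adaptation law
`θ̃′ = -ΨᵀPṽ` is chosen so that `⟪θ̃, θ̃′⟫ = -⟪Ψθ̃, Pṽ⟫` cancels the coupling term of `⟪Pṽ, ṽ′⟫`,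
leaving `V₁′ = -⟪Pṽ, Lṽ⟫ - ⟪Pṽ, d̃⟫`. For diagonal gains the first term is at most `-c₁‖ṽ‖²`,
and by Cauchy–Schwarz the second is at most `‖Pṽ‖ ρ₂ ≤ c₂ ρ₂ ‖ṽ‖`.
-/

open RealInnerProductSpace

section

variable {n m : ℕ}

lemma inner_mulVecE_transpose (M : Matrix (Fin n) (Fin m) ℝ) (x : EuclideanSpace ℝ (Fin m))
    (y : EuclideanSpace ℝ (Fin n)) : ⟪x, mulVecE Mᵀ y⟫ = ⟪mulVecE M x, y⟫ := by
  simp only [mulVecE, EuclideanSpace.inner_eq_star_dotProduct, star_trivial, dotProduct_mulVec,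
    vecMul_transpose, dotProduct_comm]

lemma dotProduct_mulVec_eq_inner (A : Matrix (Fin n) (Fin n) ℝ) (x : EuclideanSpace ℝ (Fin n)) :
    x ⬝ᵥ A *ᵥ x = ⟪x, mulVecE A x⟫ := by
  simp only [mulVecE, EuclideanSpace.inner_eq_star_dotProduct, star_trivial, dotProduct_comm]

lemma hasDerivAt_mulVecE (A : Matrix (Fin n) (Fin m) ℝ) {x : ℝ → EuclideanSpace ℝ (Fin m)}
    {x' : EuclideanSpace ℝ (Fin m)} {t : ℝ} (hx : HasDerivAt x x' t) :
    HasDerivAt (fun s => mulVecE A (x s)) (mulVecE A x') t :=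
  (LinearMap.toContinuousLinearMap (Matrix.toEuclideanLin A)).hasFDerivAt.comp_hasDerivAt t hx

lemma hasDerivAt_inner_mulVecE_self {A : Matrix (Fin n) (Fin n) ℝ} (hA : Aᵀ = A)
    {x : ℝ → EuclideanSpace ℝ (Fin n)} {x' : EuclideanSpace ℝ (Fin n)} {t : ℝ}
    (hx : HasDerivAt x x' t) :
    HasDerivAt (fun s => ⟪x s, mulVecE A (x s)⟫) (2 * ⟪mulVecE A (x t), x'⟫) t := by
  refine (hx.inner ℝ (hasDerivAt_mulVecE A hx)).congr_deriv ?_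
  rw [← hA, inner_mulVecE_transpose, hA, real_inner_comm x', two_mul]

lemma hasDerivAt_errorLyapunov {Ψ : Matrix (Fin n) (Fin m) ℝ} {P L : Matrix (Fin n) (Fin n) ℝ}
    (hP : Pᵀ = P) {v : ℝ → EuclideanSpace ℝ (Fin n)} {θ : ℝ → EuclideanSpace ℝ (Fin m)}
    {d : EuclideanSpace ℝ (Fin n)} {t : ℝ}
    (hv : HasDerivAt v (mulVecE Ψ (θ t) - mulVecE L (v t) - d) t)
    (hθ : HasDerivAt θ (-mulVecE Ψᵀ (mulVecE P (v t))) t) :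
    HasDerivAt (fun s => (1/2) * (v s ⬝ᵥ P *ᵥ v s) + (1/2) * ‖θ s‖ ^ 2)
      (-⟪mulVecE P (v t), mulVecE L (v t)⟫ - ⟪mulVecE P (v t), d⟫) t := by
  simp only [dotProduct_mulVec_eq_inner]
  refine (((hasDerivAt_inner_mulVecE_self hP hv).const_mul (1/2)).add
    (hθ.norm_sq.const_mul (1/2))).congr_deriv ?_
  rw [inner_neg_right, inner_mulVecE_transpose, real_inner_comm (mulVecE P (v t)),
    inner_sub_right, inner_sub_right]
  ring

lemma inner_mulVecE_diagonal_ge {p l : Fin n → ℝ} {c : ℝ} (h : ∀ i, c ≤ p i * l i)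
    (x : EuclideanSpace ℝ (Fin n)) :
    c * ‖x‖ ^ 2 ≤ ⟪mulVecE (diagonal p) x, mulVecE (diagonal l) x⟫ := by
  simp only [EuclideanSpace.real_norm_sq_eq, mulVecE, mulVec_diagonal, PiLp.inner_apply,
    Finset.mul_sum, RCLike.inner_apply, conj_trivial]
  refine Finset.sum_le_sum fun i _ => ?_
  nlinarith [h i, sq_nonneg (x i)]

lemma norm_mulVecE_diagonal_le {p : Fin n → ℝ} {c : ℝ} (hc : 0 ≤ c) (h : ∀ i, |p i| ≤ c)
    (x : EuclideanSpace ℝ (Fin n)) : ‖mulVecE (diagonal p) x‖ ≤ c * ‖x‖ := by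
  refine le_of_sq_le_sq ?_ (by positivity)
  simp only [mul_pow, EuclideanSpace.real_norm_sq_eq, mulVecE, mulVec_diagonal, Finset.mul_sum]
  exact Finset.sum_le_sum fun i _ => mul_le_mul_of_nonneg_right
    (sq_le_sq.mpr ((h i).trans_eq (abs_of_nonneg hc).symm)) (sq_nonneg _)

end

theorem stmt2_general
    (n m : ℕ)
    (Ψ : ℝ → Matrix (Fin n) (Fin m) ℝ)
    (ρ₂ : ℝ)
    (dtil : ℝ → EuclideanSpace ℝ (Fin n))
    (hdb : ∀ t, ‖dtil t‖ ≤ ρ₂)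
    (p l : Fin n → ℝ) (hp : ∀ i, 0 < p i)
    (P L : Matrix (Fin n) (Fin n) ℝ)
    (hP : P = Matrix.diagonal p) (hL : L = Matrix.diagonal l)
    (c₁ c₂ : ℝ) (hc₁ : c₁ = ⨅ i, p i * l i) (hc₂ : c₂ = ⨆ i, p i)
    (vtil : ℝ → EuclideanSpace ℝ (Fin n)) (θtil : ℝ → EuclideanSpace ℝ (Fin m))
    (hv : ∀ t, HasDerivAt vtil (mulVecE (Ψ t) (θtil t) - mulVecE L (vtil t) - dtil t) t)
    (hθ : ∀ t, HasDerivAt θtil (-(mulVecE (Ψ t)ᵀ (mulVecE P (vtil t)))) t)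
    (V₁ : ℝ → ℝ)
    (hV₁ : ∀ t, V₁ t = (1/2) * (vtil t ⬝ᵥ P *ᵥ vtil t) + (1/2) * ‖θtil t‖ ^ 2) :
    ∀ t, deriv V₁ t ≤ -c₁ * ‖vtil t‖ ^ 2 + c₂ * ρ₂ * ‖vtil t‖ := by
  intro t
  have hV := hasDerivAt_errorLyapunov (hP ▸ diagonal_transpose p) (hv t) (hθ t)
  rw [← funext hV₁] at hV
  rw [hV.deriv]
  have hPL : c₁ * ‖vtil t‖ ^ 2 ≤ ⟪mulVecE P (vtil t), mulVecE L (vtil t)⟫ := by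
    rw [hP, hL, hc₁]
    exact inner_mulVecE_diagonal_ge (fun i => ciInf_le (Finite.bddBelow_range _) i) _
  have hp_le : ∀ i, p i ≤ c₂ := fun i => hc₂ ▸ le_ciSup (Finite.bddAbove_range _) i
  have hc₂_nonneg : 0 ≤ c₂ := hc₂ ▸ Real.iSup_nonneg fun i => (hp i).le
  have hPv : ‖mulVecE P (vtil t)‖ ≤ c₂ * ‖vtil t‖ :=
    hP ▸ norm_mulVecE_diagonal_le hc₂_nonneg (fun i => (abs_of_pos (hp i)).trans_le (hp_le i)) _
  have hPd : -⟪mulVecE P (vtil t), dtil t⟫ ≤ c₂ * ‖vtil t‖ * ρ₂ :=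
    calc -⟪mulVecE P (vtil t), dtil t⟫ ≤ ‖mulVecE P (vtil t)‖ * ‖dtil t‖ :=
          (neg_le_abs _).trans (abs_real_inner_le_norm _ _)
      _ ≤ c₂ * ‖vtil t‖ * ρ₂ := mul_le_mul hPv (hdb t) (norm_nonneg _) (by positivity)
  linarith

/-- Along the parameter-estimation error dynamics with bounded
disturbance `‖d̃(t)‖ ≤ ρ₂` and positive definite diagonal gains `P, L`, the
Lyapunov function `V₁(t) = ½ ṽᵀPṽ + ½‖θ̃‖²` satisfies
`V₁′(t) ≤ −c₁‖ṽ(t)‖² + c₂ρ₂‖ṽ(t)‖`, where `c₁ = λ_min(PL)` and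
`c₂ = λ_max(P)` (for diagonal matrices these are the extreme diagonal entries). -/
theorem stmt2
    (n m : ℕ) (hn : 0 < n) (hm : 0 < m)
    (Ψ : ℝ → Matrix (Fin n) (Fin m) ℝ) (hΨ : Continuous Ψ)
    (ρ₂ : ℝ) (hρ₂ : 0 < ρ₂)
    (dtil : ℝ → EuclideanSpace ℝ (Fin n)) (hdc : Continuous dtil)
    (hdb : ∀ t, ‖dtil t‖ ≤ ρ₂)
    (p l : Fin n → ℝ) (hp : ∀ i, 0 < p i) (hl : ∀ i, 0 < l i)
    (P L : Matrix (Fin n) (Fin n) ℝ)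
    (hP : P = Matrix.diagonal p) (hL : L = Matrix.diagonal l)
    (c₁ c₂ : ℝ) (hc₁ : c₁ = ⨅ i, p i * l i) (hc₂ : c₂ = ⨆ i, p i)
    (vtil : ℝ → EuclideanSpace ℝ (Fin n)) (θtil : ℝ → EuclideanSpace ℝ (Fin m))
    (hv : ∀ t, HasDerivAt vtil (mulVecE (Ψ t) (θtil t) - mulVecE L (vtil t) - dtil t) t)
    (hθ : ∀ t, HasDerivAt θtil (-(mulVecE (Ψ t)ᵀ (mulVecE P (vtil t)))) t)
    (V₁ : ℝ → ℝ)
    (hV₁ : ∀ t, V₁ t = (1/2) * (vtil t ⬝ᵥ P *ᵥ vtil t) + (1/2) * ‖θtil t‖ ^ 2) :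
    ∀ t, deriv V₁ t ≤ -c₁ * ‖vtil t‖ ^ 2 + c₂ * ρ₂ * ‖vtil t‖ :=
  stmt2_general n m Ψ ρ₂ dtil hdb p l hp P L hP hL c₁ c₂ hc₁ hc₂ vtil θtil hv hθ V₁ hV₁
end

section
/- Let a, b, d be strictly positive real constants and let p, q : ℝ → ℝ be continuous functions with p(t) ≥ 0 and q(t) ≥ 0 for all t. Suppose ϑ : ℝ → ℝ is differentiable and satisfies the shunting neurodynamics equation ϑ′(t) = − a ϑ(t) + (b − ϑ(t)) p(t) − (d + ϑ(t)) q(t) for all t ≥ 0, and suppose −d ≤ ϑ(0) ≤ b. Then −d ≤ ϑ(t) ≤ b for all t ≥ 0; that is, the neural activity remains bounded above by b and below by −d. -/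
/-!
At the upper level `ϑ = b` the right-hand side equals `-a b - (b + d) q ≤ -a b < 0`, and at the
lower level `ϑ = -d` it equals `a d + (b + d) p ≥ a d > 0`: the vector field points strictly into
`[-d, b]` at both ends, so a solution starting in the interval can never cross either end.
-/

open Set

theorem le_of_hasDerivAt_neg_of_eq {f f' : ℝ → ℝ} {t₀ c : ℝ}
    (hf : ∀ x, t₀ ≤ x → HasDerivAt f (f' x) x)
    (hc : ∀ x, t₀ ≤ x → f x = c → f' x < 0) (h₀ : f t₀ ≤ c) :
    ∀ t, t₀ ≤ t → f t ≤ c := by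
  intro t ht
  have hcont : ContinuousOn f (Icc t₀ t) := fun x hx =>
    (hf x hx.1).continuousAt.continuousWithinAt
  have key := image_le_of_deriv_right_lt_deriv_boundary (B := fun _ => c) (B' := fun _ => 0)
    hcont (fun x hx => (hf x hx.1).hasDerivWithinAt) h₀ (fun x => hasDerivAt_const x c)
    (fun x hx hfx => hc x hx.1 hfx)
  exact key ⟨ht, le_rfl⟩

theorem le_of_hasDerivAt_pos_of_eq {f f' : ℝ → ℝ} {t₀ c : ℝ}
    (hf : ∀ x, t₀ ≤ x → HasDerivAt f (f' x) x)
    (hc : ∀ x, t₀ ≤ x → f x = c → 0 < f' x) (h₀ : c ≤ f t₀) :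
    ∀ t, t₀ ≤ t → c ≤ f t := by
  intro t ht
  have := le_of_hasDerivAt_neg_of_eq (f := -f) (f' := -f') (c := -c)
    (fun x hx => (hf x hx).neg) (fun x hx hfx => neg_neg_of_pos (hc x hx (neg_inj.mp hfx)))
    (neg_le_neg h₀) t ht
  exact neg_le_neg_iff.mp this

theorem stmt10_general
    (a b d : ℝ) (ha : 0 < a) (hb : 0 < b) (hd : 0 < d)
    (p q : ℝ → ℝ)
    (hp : ∀ t, 0 ≤ p t) (hq : ∀ t, 0 ≤ q t)
    (ϑ : ℝ → ℝ)
    (hode : ∀ t : ℝ, 0 ≤ t →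
      HasDerivAt ϑ (-a * ϑ t + (b - ϑ t) * p t - (d + ϑ t) * q t) t)
    (h0 : -d ≤ ϑ 0 ∧ ϑ 0 ≤ b) :
    ∀ t : ℝ, 0 ≤ t → -d ≤ ϑ t ∧ ϑ t ≤ b := by
  have inward_at_lower : ∀ t, 0 ≤ t → ϑ t = -d →
      0 < -a * ϑ t + (b - ϑ t) * p t - (d + ϑ t) * q t := by
    intro t _ hϑ
    rw [hϑ]
    nlinarith [mul_nonneg (add_pos hb hd).le (hp t), mul_pos ha hd]
  have inward_at_upper : ∀ t, 0 ≤ t → ϑ t = b →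
      -a * ϑ t + (b - ϑ t) * p t - (d + ϑ t) * q t < 0 := by
    intro t _ hϑ
    rw [hϑ]
    nlinarith [mul_nonneg (add_pos hd hb).le (hq t), mul_pos ha hb]
  exact fun t ht => ⟨le_of_hasDerivAt_pos_of_eq hode inward_at_lower h0.1 t ht,
    le_of_hasDerivAt_neg_of_eq hode inward_at_upper h0.2 t ht⟩

/-- Boundedness of the shunting neurodynamics model: if
`ϑ′ = −aϑ + (b − ϑ)p(t) − (d + ϑ)q(t)` with `a, b, d > 0`, continuous
nonnegative inputs `p, q`, and `−d ≤ ϑ(0) ≤ b`, then `−d ≤ ϑ(t) ≤ b` for all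
`t ≥ 0`. -/
theorem stmt10
    (a b d : ℝ) (ha : 0 < a) (hb : 0 < b) (hd : 0 < d)
    (p q : ℝ → ℝ) (hpc : Continuous p) (hqc : Continuous q)
    (hp : ∀ t, 0 ≤ p t) (hq : ∀ t, 0 ≤ q t)
    (ϑ : ℝ → ℝ)
    (hode : ∀ t : ℝ, 0 ≤ t →
      HasDerivAt ϑ (-a * ϑ t + (b - ϑ t) * p t - (d + ϑ t) * q t) t)
    (h0 : -d ≤ ϑ 0 ∧ ϑ 0 ≤ b) :
    ∀ t : ℝ, 0 ≤ t → -d ≤ ϑ t ∧ ϑ t ≤ b :=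
  stmt10_general a b d ha hb hd p q hp hq ϑ hode h0
end
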